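/- Under the stated assumptions, the unit tangent vector satisfies the evolution equation ∂_t T = (∂_s v_N + κ v_T − τ v_B) N + (∂_s v_B + τ v_N) B. -/

import Mathlib

noncomputable section
open Real
local notation "E3" => EuclideanSpace ℝ (Fin 3)
local notation "⟪" x ", " y "⟫" => @inner ℝ _ _ x y

/-- The cross product on `EuclideanSpace ℝ (Fin 3)`. -/
def cross3 (a b : EuclideanSpace ℝ (Fin 3)) : EuclideanSpace ℝ (Fin 3) :=
  (WithLp.equiv 2 (Fin 3 → ℝ)).symm
    ![a 1 * b 2 - a 2 * b 1, a 2 * b 0 - a 0 * b 2, a 0 * b 1 - a 1 * b 0]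

lemma cross3_apply (a b : E3) (i : Fin 3) :
    cross3 a b i = ![a 1 * b 2 - a 2 * b 1, a 2 * b 0 - a 0 * b 2, a 0 * b 1 - a 1 * b 0] i := rfl

lemma cross3_0 (a b : E3) : cross3 a b 0 = a 1 * b 2 - a 2 * b 1 := rfl
lemma cross3_1 (a b : E3) : cross3 a b 1 = a 2 * b 0 - a 0 * b 2 := rfl
lemma cross3_2 (a b : E3) : cross3 a b 2 = a 0 * b 1 - a 1 * b 0 := rfl

lemma inner3 (x y : E3) : ⟪x, y⟫ = x 0 * y 0 + x 1 * y 1 + x 2 * y 2 := by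
  simp [PiLp.inner_apply, RCLike.inner_apply, Fin.sum_univ_three, mul_comm]

/-- Partial derivative with respect to the first (spatial) variable `u`. -/
def pu {α : Type*} [NormedAddCommGroup α] [NormedSpace ℝ α]
    (f : ℝ × ℝ → α) (p : ℝ × ℝ) : α :=
  deriv (fun u => f (u, p.2)) p.1

/-- Partial derivative with respect to the second (time) variable `t`. -/
def pt {α : Type*} [NormedAddCommGroup α] [NormedSpace ℝ α]
    (f : ℝ × ℝ → α) (p : ℝ × ℝ) : α :=
  deriv (fun t => f (p.1, t)) p.2

/-- Arc-length derivative `∂_s = g⁻¹ ∂_u` along the curves parametrized by `X`. -/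
def Ds (X : ℝ × ℝ → EuclideanSpace ℝ (Fin 3)) {α : Type*}
    [NormedAddCommGroup α] [NormedSpace ℝ α] (f : ℝ × ℝ → α) (p : ℝ × ℝ) : α :=
  ‖pu X p‖⁻¹ • pu f p

variable {α : Type*} [NormedAddCommGroup α] [NormedSpace ℝ α]

lemma lineU_hasDerivAt (p : ℝ × ℝ) :
    HasDerivAt (fun u : ℝ => (u, p.2)) ((1 : ℝ), (0 : ℝ)) p.1 := by
  simpa using (hasDerivAt_id p.1).prodMk (hasDerivAt_const p.1 p.2)

lemma lineT_hasDerivAt (p : ℝ × ℝ) :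
    HasDerivAt (fun t : ℝ => (p.1, t)) ((0 : ℝ), (1 : ℝ)) p.2 := by
  simpa using (hasDerivAt_const p.2 p.1).prodMk (hasDerivAt_id p.2)

lemma sliceU_hasDerivAt {f : ℝ × ℝ → α} {p : ℝ × ℝ} (hf : DifferentiableAt ℝ f p) :
    HasDerivAt (fun u => f (u, p.2)) (fderiv ℝ f p ((1 : ℝ), (0 : ℝ))) p.1 := by
  have := hf.hasFDerivAt.comp_hasDerivAt p.1 (lineU_hasDerivAt p)
  exact this

lemma sliceT_hasDerivAt {f : ℝ × ℝ → α} {p : ℝ × ℝ} (hf : DifferentiableAt ℝ f p) :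
    HasDerivAt (fun t => f (p.1, t)) (fderiv ℝ f p ((0 : ℝ), (1 : ℝ))) p.2 := by
  have := hf.hasFDerivAt.comp_hasDerivAt p.2 (lineT_hasDerivAt p)
  exact this

lemma pu_eq {f : ℝ × ℝ → α} {p : ℝ × ℝ} (hf : DifferentiableAt ℝ f p) :
    pu f p = fderiv ℝ f p ((1 : ℝ), (0 : ℝ)) := (sliceU_hasDerivAt hf).deriv

lemma pt_eq {f : ℝ × ℝ → α} {p : ℝ × ℝ} (hf : DifferentiableAt ℝ f p) :
    pt f p = fderiv ℝ f p ((0 : ℝ), (1 : ℝ)) := (sliceT_hasDerivAt hf).deriv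

lemma pu_hasDerivAt {f : ℝ × ℝ → α} {p : ℝ × ℝ} (hf : DifferentiableAt ℝ f p) :
    HasDerivAt (fun u => f (u, p.2)) (pu f p) p.1 := by
  rw [pu_eq hf]; exact sliceU_hasDerivAt hf

lemma pt_hasDerivAt {f : ℝ × ℝ → α} {p : ℝ × ℝ} (hf : DifferentiableAt ℝ f p) :
    HasDerivAt (fun t => f (p.1, t)) (pt f p) p.2 := by
  rw [pt_eq hf]; exact sliceT_hasDerivAt hf

lemma contDiff_pu {f : ℝ × ℝ → α} (hf : ContDiff ℝ (⊤ : ℕ∞) f) : ContDiff ℝ (⊤ : ℕ∞) (pu f) := by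
  have h1 : ContDiff ℝ (⊤ : ℕ∞) (fderiv ℝ f) := hf.fderiv_right (by simp)
  have h2 : ContDiff ℝ (⊤ : ℕ∞) (fun p => fderiv ℝ f p ((1 : ℝ), (0 : ℝ))) :=
    h1.clm_apply contDiff_const
  have : pu f = fun p => fderiv ℝ f p ((1 : ℝ), (0 : ℝ)) := by
    funext p; exact pu_eq (hf.differentiable (by simp) p)
  rw [this]; exact h2

lemma contDiff_pt {f : ℝ × ℝ → α} (hf : ContDiff ℝ (⊤ : ℕ∞) f) : ContDiff ℝ (⊤ : ℕ∞) (pt f) := by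
  have h1 : ContDiff ℝ (⊤ : ℕ∞) (fderiv ℝ f) := hf.fderiv_right (by simp)
  have h2 : ContDiff ℝ (⊤ : ℕ∞) (fun p => fderiv ℝ f p ((0 : ℝ), (1 : ℝ))) :=
    h1.clm_apply contDiff_const
  have : pt f = fun p => fderiv ℝ f p ((0 : ℝ), (1 : ℝ)) := by
    funext p; exact pt_eq (hf.differentiable (by simp) p)
  rw [this]; exact h2

lemma pt_clm {β : Type*} [NormedAddCommGroup β] [NormedSpace ℝ β]
    {F : ℝ × ℝ → β} {p : ℝ × ℝ} (L : β →L[ℝ] α) (hF : DifferentiableAt ℝ F p) :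
    pt (fun q => L (F q)) p = L (pt F p) :=
  (L.hasFDerivAt.comp_hasDerivAt p.2 (pt_hasDerivAt hF)).deriv

lemma pu_clm {β : Type*} [NormedAddCommGroup β] [NormedSpace ℝ β]
    {F : ℝ × ℝ → β} {p : ℝ × ℝ} (L : β →L[ℝ] α) (hF : DifferentiableAt ℝ F p) :
    pu (fun q => L (F q)) p = L (pu F p) :=
  (L.hasFDerivAt.comp_hasDerivAt p.1 (pu_hasDerivAt hF)).deriv

lemma clairaut {X : ℝ × ℝ → α} (hX : ContDiff ℝ (⊤ : ℕ∞) X) (p : ℝ × ℝ) :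
    pt (pu X) p = pu (pt X) p := by
  have hd : Differentiable ℝ X := hX.differentiable (by simp)
  have hf' : ContDiff ℝ (⊤ : ℕ∞) (fderiv ℝ X) := hX.fderiv_right (by simp)
  have hf'd : DifferentiableAt ℝ (fderiv ℝ X) p := hf'.differentiable (by simp) p
  have hsym := second_derivative_symmetric (f' := fderiv ℝ X) (f'' := fderiv ℝ (fderiv ℝ X) p)
      (fun y => (hd y).hasFDerivAt) hf'd.hasFDerivAt
  have hpuX : pu X = fun q => ContinuousLinearMap.apply ℝ α ((1:ℝ),(0:ℝ)) (fderiv ℝ X q) := by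
    funext q; exact pu_eq (hd q)
  have hptX : pt X = fun q => ContinuousLinearMap.apply ℝ α ((0:ℝ),(1:ℝ)) (fderiv ℝ X q) := by
    funext q; exact pt_eq (hd q)
  calc pt (pu X) p
      = fderiv ℝ (fderiv ℝ X) p ((0:ℝ),(1:ℝ)) ((1:ℝ),(0:ℝ)) := by
        rw [hpuX, pt_clm _ hf'd, pt_eq hf'd]; rfl
    _ = fderiv ℝ (fderiv ℝ X) p ((1:ℝ),(0:ℝ)) ((0:ℝ),(1:ℝ)) := hsym _ _
    _ = pu (pt X) p := by
        rw [hptX, pu_clm _ hf'd, pu_eq hf'd]; rfl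

lemma E3ext {x y : E3} (h : ∀ i, x i = y i) : x = y := PiLp.ext h

lemma E3ext3 {x y : E3} (h0 : x 0 = y 0) (h1 : x 1 = y 1) (h2 : x 2 = y 2) : x = y := by
  apply PiLp.ext; intro i
  fin_cases i
  · exact h0
  · exact h1
  · exact h2

lemma proj_hasDerivAt {f : ℝ → E3} {f' : E3} {x : ℝ} (hf : HasDerivAt f f' x) (i : Fin 3) :
    HasDerivAt (fun t => f t i) (f' i) x := by
  have := (EuclideanSpace.proj (𝕜 := ℝ) i).hasFDerivAt.comp_hasDerivAt x hf
  exact this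

lemma cross3_hasDerivAt {f g : ℝ → E3} {f' g' : E3} {x : ℝ}
    (hf : HasDerivAt f f' x) (hg : HasDerivAt g g' x) :
    HasDerivAt (fun t => cross3 (f t) (g t)) (cross3 f' (g x) + cross3 (f x) g') x := by
  have hc : (fun t => cross3 (f t) (g t)) = fun t =>
      (f t 1 * g t 2 - f t 2 * g t 1) • EuclideanSpace.single (0 : Fin 3) (1 : ℝ)
      + (f t 2 * g t 0 - f t 0 * g t 2) • EuclideanSpace.single (1 : Fin 3) (1 : ℝ)
      + (f t 0 * g t 1 - f t 1 * g t 0) • EuclideanSpace.single (2 : Fin 3) (1 : ℝ) := by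
    funext t; apply E3ext3 <;>
      simp [cross3_0, cross3_1, cross3_2, EuclideanSpace.single_apply, PiLp.add_apply,
        PiLp.smul_apply]
  have h0 := (((proj_hasDerivAt hf 1).mul (proj_hasDerivAt hg 2)).sub
      ((proj_hasDerivAt hf 2).mul (proj_hasDerivAt hg 1))).smul_const
      (EuclideanSpace.single (0 : Fin 3) (1 : ℝ))
  have h1 := (((proj_hasDerivAt hf 2).mul (proj_hasDerivAt hg 0)).sub
      ((proj_hasDerivAt hf 0).mul (proj_hasDerivAt hg 2))).smul_const
      (EuclideanSpace.single (1 : Fin 3) (1 : ℝ))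
  have h2 := (((proj_hasDerivAt hf 0).mul (proj_hasDerivAt hg 1)).sub
      ((proj_hasDerivAt hf 1).mul (proj_hasDerivAt hg 0))).smul_const
      (EuclideanSpace.single (2 : Fin 3) (1 : ℝ))
  have h := (h0.add h1).add h2
  rw [hc]
  have key : cross3 f' (g x) + cross3 (f x) g' =
      (f' 1 * g x 2 + f x 1 * g' 2 - (f' 2 * g x 1 + f x 2 * g' 1)) •
          EuclideanSpace.single (0 : Fin 3) (1 : ℝ)
        + (f' 2 * g x 0 + f x 2 * g' 0 - (f' 0 * g x 2 + f x 0 * g' 2)) •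
          EuclideanSpace.single (1 : Fin 3) (1 : ℝ)
        + (f' 0 * g x 1 + f x 0 * g' 1 - (f' 1 * g x 0 + f x 1 * g' 0)) •
          EuclideanSpace.single (2 : Fin 3) (1 : ℝ) := by
    apply E3ext3 <;>
      simp [cross3_0, cross3_1, cross3_2, EuclideanSpace.single_apply, PiLp.add_apply,
        PiLp.smul_apply] <;> ring
  rw [key]; exact h


lemma inner_cross_left (a b : E3) : ⟪cross3 a b, a⟫ = 0 := by
  simp only [inner3, cross3_0, cross3_1, cross3_2]; ring

lemma inner_cross_right (a b : E3) : ⟪cross3 a b, b⟫ = 0 := by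
  simp only [inner3, cross3_0, cross3_1, cross3_2]; ring

lemma cross3_anticomm (a b : E3) : cross3 b a = -cross3 a b := by
  apply E3ext3 <;>
    simp only [PiLp.neg_apply, cross3_0, cross3_1, cross3_2] <;> ring

lemma cross3_cross3 (x y z : E3) :
    cross3 (cross3 x y) z = ⟪x, z⟫ • y - ⟪y, z⟫ • x := by
  apply E3ext3 <;>
    simp only [PiLp.sub_apply, PiLp.smul_apply, smul_eq_mul, inner3,
      cross3_0, cross3_1, cross3_2] <;> ring

lemma inner_cross_cross (a x b y : E3) :
    ⟪cross3 a x, cross3 b y⟫ = ⟪a, b⟫ * ⟪x, y⟫ - ⟪a, y⟫ * ⟪x, b⟫ := by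
  simp only [inner3, cross3_0, cross3_1, cross3_2]; ring

lemma expand3 (a b w : E3) (ha : ⟪a, a⟫ = 1) (hb : ⟪b, b⟫ = 1) (hab : ⟪a, b⟫ = 0) :
    w = ⟪w, a⟫ • a + ⟪w, b⟫ • b + ⟪w, cross3 a b⟫ • cross3 a b := by
  rw [inner3] at ha hb hab
  apply E3ext3 <;>
    simp only [PiLp.add_apply, PiLp.smul_apply, smul_eq_mul, inner3,
      cross3_0, cross3_1, cross3_2]
  · linear_combination ((-(w 0))*(1 - b 0*b 0 + ((b 0^2+b 1^2+b 2^2)-1)) + (-(w 1))*(0 - b 0*b 1) + (-(w 2))*(0 - b 0*b 2)) * ha + ((-(w 0))*(1 - a 0*a 0) + (-(w 1))*(0 - a 0*a 1) + (-(w 2))*(0 - a 0*a 2)) * hb + ((-(w 0))*(a 0*b 0 + a 0*b 0 - (a 0*b 0+a 1*b 1+a 2*b 2)) + (-(w 1))*(a 0*b 1 + a 1*b 0) + (-(w 2))*(a 0*b 2 + a 2*b 0)) * hab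
  · linear_combination ((-(w 0))*(0 - b 1*b 0) + (-(w 1))*(1 - b 1*b 1 + ((b 0^2+b 1^2+b 2^2)-1)) + (-(w 2))*(0 - b 1*b 2)) * ha + ((-(w 0))*(0 - a 1*a 0) + (-(w 1))*(1 - a 1*a 1) + (-(w 2))*(0 - a 1*a 2)) * hb + ((-(w 0))*(a 1*b 0 + a 0*b 1) + (-(w 1))*(a 1*b 1 + a 1*b 1 - (a 0*b 0+a 1*b 1+a 2*b 2)) + (-(w 2))*(a 1*b 2 + a 2*b 1)) * hab
  · linear_combination ((-(w 0))*(0 - b 2*b 0) + (-(w 1))*(0 - b 2*b 1) + (-(w 2))*(1 - b 2*b 2 + ((b 0^2+b 1^2+b 2^2)-1))) * ha + ((-(w 0))*(0 - a 2*a 0) + (-(w 1))*(0 - a 2*a 1) + (-(w 2))*(1 - a 2*a 2)) * hb + ((-(w 0))*(a 2*b 0 + a 0*b 2) + (-(w 1))*(a 2*b 1 + a 1*b 2) + (-(w 2))*(a 2*b 2 + a 2*b 2 - (a 0*b 0+a 1*b 1+a 2*b 2))) * hab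

lemma cross3_smul_left (c : ℝ) (a b : E3) : cross3 (c • a) b = c • cross3 a b := by
  apply E3ext3 <;>
    simp only [PiLp.smul_apply, smul_eq_mul, cross3_0, cross3_1, cross3_2] <;> ring

lemma cross3_smul_right (c : ℝ) (a b : E3) : cross3 a (c • b) = c • cross3 a b := by
  apply E3ext3 <;>
    simp only [PiLp.smul_apply, smul_eq_mul, cross3_0, cross3_1, cross3_2] <;> ring

lemma cross3_self (a : E3) : cross3 a a = 0 := by
  apply E3ext3 <;>
    simp only [PiLp.zero_apply, cross3_0, cross3_1, cross3_2] <;> ring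

lemma contDiff_cross3 {F G : ℝ × ℝ → E3} (hF : ContDiff ℝ (⊤ : ℕ∞) F) (hG : ContDiff ℝ (⊤ : ℕ∞) G) :
    ContDiff ℝ (⊤ : ℕ∞) (fun q => cross3 (F q) (G q)) := by
  have hc : (fun q => cross3 (F q) (G q)) = fun q =>
      (F q 1 * G q 2 - F q 2 * G q 1) • EuclideanSpace.single (0 : Fin 3) (1 : ℝ)
      + (F q 2 * G q 0 - F q 0 * G q 2) • EuclideanSpace.single (1 : Fin 3) (1 : ℝ)
      + (F q 0 * G q 1 - F q 1 * G q 0) • EuclideanSpace.single (2 : Fin 3) (1 : ℝ) := by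
    funext q; apply E3ext3 <;>
      simp [cross3_0, cross3_1, cross3_2, EuclideanSpace.single_apply, PiLp.add_apply,
        PiLp.smul_apply]
  rw [hc]
  have hFi : ∀ i : Fin 3, ContDiff ℝ (⊤ : ℕ∞) (fun q => F q i) := fun i =>
    (EuclideanSpace.proj (𝕜 := ℝ) i).contDiff.comp hF
  have hGi : ∀ i : Fin 3, ContDiff ℝ (⊤ : ℕ∞) (fun q => G q i) := fun i =>
    (EuclideanSpace.proj (𝕜 := ℝ) i).contDiff.comp hG
  exact (((((hFi 1).mul (hGi 2)).sub ((hFi 2).mul (hGi 1))).smul contDiff_const).add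
    ((((hFi 2).mul (hGi 0)).sub ((hFi 0).mul (hGi 2))).smul contDiff_const)).add
      ((((hFi 0).mul (hGi 1)).sub ((hFi 1).mul (hGi 0))).smul contDiff_const)

theorem tangent_evolution
    (X : ℝ × ℝ → EuclideanSpace ℝ (Fin 3)) (vN vB vT : ℝ × ℝ → ℝ)
    (g κ τ : ℝ × ℝ → ℝ) (T N B : ℝ × ℝ → EuclideanSpace ℝ (Fin 3))
    (hX : ContDiff ℝ (⊤ : ℕ∞) X) (hXper : ∀ u t : ℝ, X (u + 1, t) = X (u, t))
    (hvN : ContDiff ℝ (⊤ : ℕ∞) vN) (hvNper : ∀ u t : ℝ, vN (u + 1, t) = vN (u, t))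
    (hvB : ContDiff ℝ (⊤ : ℕ∞) vB) (hvBper : ∀ u t : ℝ, vB (u + 1, t) = vB (u, t))
    (hvT : ContDiff ℝ (⊤ : ℕ∞) vT) (hvTper : ∀ u t : ℝ, vT (u + 1, t) = vT (u, t))
    (hg : ∀ p : ℝ × ℝ, g p = ‖pu X p‖) (hgpos : ∀ p : ℝ × ℝ, 0 < g p)
    (hT : ∀ p : ℝ × ℝ, T p = Ds X X p)
    (hκ : ∀ p : ℝ × ℝ, κ p = ‖Ds X T p‖) (hκpos : ∀ p : ℝ × ℝ, 0 < κ p)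
    (hN : ∀ p : ℝ × ℝ, N p = (κ p)⁻¹ • Ds X T p)
    (hB : ∀ p : ℝ × ℝ, B p = cross3 (T p) (N p))
    (hτ : ∀ p : ℝ × ℝ, τ p = -(inner ℝ (Ds X B p) (N p) : ℝ))
    (hflow : ∀ p : ℝ × ℝ, pt X p = vN p • N p + vB p • B p + vT p • T p) :
    ∀ p : ℝ × ℝ,
      pt T p = (Ds X vN p + κ p * vT p - τ p * vB p) • N p
        + (Ds X vB p + τ p * vN p) • B p := by
  -- basic nonvanishing
  have hgne : ∀ q, g q ≠ 0 := fun q => (hgpos q).ne'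
  have hκne : ∀ q, κ q ≠ 0 := fun q => (hκpos q).ne'
  have hpuX_ne : ∀ q, pu X q ≠ 0 := fun q => by
    have h := hgpos q; rw [hg q] at h; exact norm_pos_iff.mp h
  have hnorm_ne : ∀ q, ‖pu X q‖ ≠ 0 := fun q => norm_ne_zero_iff.mpr (hpuX_ne q)
  -- smoothness
  have hpuX_cd : ContDiff ℝ (⊤ : ℕ∞) (pu X) := contDiff_pu hX
  have hg_cd : ContDiff ℝ (⊤ : ℕ∞) g := by
    have h : g = fun q => ‖pu X q‖ := funext hg
    rw [h, contDiff_iff_contDiffAt]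
    exact fun q => (hpuX_cd.contDiffAt).norm ℝ (hpuX_ne q)
  have hT_eq : T = fun q => (g q)⁻¹ • pu X q := by
    funext q; rw [hT q]; show ‖pu X q‖⁻¹ • pu X q = (g q)⁻¹ • pu X q; rw [hg q]
  have hT_cd : ContDiff ℝ (⊤ : ℕ∞) T := by
    rw [hT_eq, contDiff_iff_contDiffAt]
    exact fun q => ((hg_cd.contDiffAt).inv (hgne q)).smul hpuX_cd.contDiffAt
  have hdT : Differentiable ℝ T := hT_cd.differentiable (by simp)
  have hpuT_cd : ContDiff ℝ (⊤ : ℕ∞) (pu T) := contDiff_pu hT_cd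
  -- Frenet basics
  have hDsT : ∀ q, Ds X T q = κ q • N q := fun q => by
    rw [hN q, smul_smul, mul_inv_cancel₀ (hκne q), one_smul]
  have hpuT : ∀ q, pu T q = (g q * κ q) • N q := fun q => by
    have h1 : g q • Ds X T q = pu T q := by
      show g q • (‖pu X q‖⁻¹ • pu T q) = pu T q
      rw [← hg q, smul_smul, mul_inv_cancel₀ (hgne q), one_smul]
    rw [← h1, hDsT q, smul_smul]
  have hN_norm : ∀ q, ‖N q‖ = 1 := fun q => by
    rw [hN q, norm_smul, ← hκ q, Real.norm_eq_abs, abs_of_pos (inv_pos.mpr (hκpos q)),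
      inv_mul_cancel₀ (hκne q)]
  have hN_ne : ∀ q, N q ≠ 0 := fun q => by
    intro h; have := hN_norm q; rw [h, norm_zero] at this; norm_num at this
  have hN_eq : N = fun q => (κ q)⁻¹ • ((g q)⁻¹ • pu T q) := by
    funext q; rw [hN q]; congr 1; show ‖pu X q‖⁻¹ • pu T q = (g q)⁻¹ • pu T q; rw [hg q]
  have hκ_cd : ContDiff ℝ (⊤ : ℕ∞) κ := by
    have h : κ = fun q => ‖(g q)⁻¹ • pu T q‖ := by
      funext q; rw [hκ q]; congr 1; show ‖pu X q‖⁻¹ • pu T q = (g q)⁻¹ • pu T q; rw [hg q]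
    have hne : ∀ q, (g q)⁻¹ • pu T q ≠ 0 := fun q => by
      have h2 : (g q)⁻¹ • pu T q = Ds X T q := by
        show _ = ‖pu X q‖⁻¹ • pu T q; rw [hg q]
      rw [h2, hDsT q]
      exact smul_ne_zero (hκne q) (hN_ne q)
    rw [h, contDiff_iff_contDiffAt]
    exact fun q => (((hg_cd.contDiffAt).inv (hgne q)).smul hpuT_cd.contDiffAt).norm ℝ (hne q)
  have hN_cd : ContDiff ℝ (⊤ : ℕ∞) N := by
    rw [hN_eq, contDiff_iff_contDiffAt]
    exact fun q => ((hκ_cd.contDiffAt).inv (hκne q)).smul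
      (((hg_cd.contDiffAt).inv (hgne q)).smul hpuT_cd.contDiffAt)
  have hdN : Differentiable ℝ N := hN_cd.differentiable (by simp)
  have hB_cd : ContDiff ℝ (⊤ : ℕ∞) B := by
    have h : B = fun q => cross3 (T q) (N q) := funext hB
    rw [h]; exact contDiff_cross3 hT_cd hN_cd
  have hdB : Differentiable ℝ B := hB_cd.differentiable (by simp)
  -- orthonormality
  have hTT : ∀ q, ⟪T q, T q⟫ = 1 := fun q => by
    rw [hT q]
    show ⟪‖pu X q‖⁻¹ • pu X q, ‖pu X q‖⁻¹ • pu X q⟫ = 1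
    rw [real_inner_smul_left, real_inner_smul_right, real_inner_self_eq_norm_mul_norm]
    field_simp [hnorm_ne q]
  have hNN : ∀ q, ⟪N q, N q⟫ = 1 := fun q => by
    rw [real_inner_self_eq_norm_mul_norm, hN_norm q]; norm_num
  have hTpuT : ∀ q, ⟪T q, pu T q⟫ = 0 := fun q => by
    have hc : HasDerivAt (fun u => ⟪T (u, q.2), T (u, q.2)⟫)
        (⟪T q, pu T q⟫ + ⟪pu T q, T q⟫) q.1 :=
      HasDerivAt.inner ℝ (pu_hasDerivAt (hdT q)) (pu_hasDerivAt (hdT q))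
    have h0 : (fun u => ⟪T (u, q.2), T (u, q.2)⟫) = fun _ => (1 : ℝ) :=
      funext fun u => hTT (u, q.2)
    rw [h0] at hc
    have h1 := hc.unique (hasDerivAt_const _ _)
    have h2 : ⟪pu T q, T q⟫ = ⟪T q, pu T q⟫ := real_inner_comm _ _
    linarith
  have hNinv : ∀ q, N q = (g q * κ q)⁻¹ • pu T q := fun q => by
    rw [hpuT q, smul_smul, inv_mul_cancel₀ (mul_ne_zero (hgne q) (hκne q)), one_smul]
  have hTN : ∀ q, ⟪T q, N q⟫ = 0 := fun q => by
    rw [hNinv q, real_inner_smul_right, hTpuT q, mul_zero]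
  have hNpuN : ∀ q, ⟪N q, pu N q⟫ = 0 := fun q => by
    have hc : HasDerivAt (fun u => ⟪N (u, q.2), N (u, q.2)⟫)
        (⟪N q, pu N q⟫ + ⟪pu N q, N q⟫) q.1 :=
      HasDerivAt.inner ℝ (pu_hasDerivAt (hdN q)) (pu_hasDerivAt (hdN q))
    have h0 : (fun u => ⟪N (u, q.2), N (u, q.2)⟫) = fun _ => (1 : ℝ) :=
      funext fun u => hNN (u, q.2)
    rw [h0] at hc
    have h1 := hc.unique (hasDerivAt_const _ _)
    have h2 : ⟪pu N q, N q⟫ = ⟪N q, pu N q⟫ := real_inner_comm _ _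
    linarith
  have hTpuN : ∀ q, ⟪T q, pu N q⟫ = -(g q * κ q) := fun q => by
    have hc : HasDerivAt (fun u => ⟪T (u, q.2), N (u, q.2)⟫)
        (⟪T q, pu N q⟫ + ⟪pu T q, N q⟫) q.1 :=
      HasDerivAt.inner ℝ (pu_hasDerivAt (hdT q)) (pu_hasDerivAt (hdN q))
    have h0 : (fun u => ⟪T (u, q.2), N (u, q.2)⟫) = fun _ => (0 : ℝ) :=
      funext fun u => hTN (u, q.2)
    rw [h0] at hc
    have h1 := hc.unique (hasDerivAt_const _ _)
    have h2 : ⟪pu T q, N q⟫ = g q * κ q := by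
      rw [hpuT q, real_inner_smul_left, hNN q, mul_one]
    linarith
  have hBT : ∀ q, ⟪B q, T q⟫ = 0 := fun q => by rw [hB q]; exact inner_cross_left _ _
  have hBN : ∀ q, ⟪B q, N q⟫ = 0 := fun q => by rw [hB q]; exact inner_cross_right _ _
  -- derivative of B
  have hpuB_cross : ∀ q, pu B q = cross3 (T q) (pu N q) := fun q => by
    have hc : HasDerivAt (fun u => cross3 (T (u, q.2)) (N (u, q.2)))
        (cross3 (pu T q) (N q) + cross3 (T q) (pu N q)) q.1 :=
      cross3_hasDerivAt (pu_hasDerivAt (hdT q)) (pu_hasDerivAt (hdN q))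
    have h0 : (fun u => cross3 (T (u, q.2)) (N (u, q.2))) = fun u => B (u, q.2) :=
      funext fun u => (hB (u, q.2)).symm
    rw [h0] at hc
    have h1 : pu B q = cross3 (pu T q) (N q) + cross3 (T q) (pu N q) := hc.deriv
    rw [h1, hpuT q, cross3_smul_left, cross3_self, smul_zero, zero_add]
  have hpuBN : ∀ q, ⟪pu B q, N q⟫ = -(g q * τ q) := fun q => by
    have h1 : τ q = -(‖pu X q‖⁻¹ * ⟪pu B q, N q⟫) := by
      rw [hτ q]
      congr 1
      exact real_inner_smul_left _ _ _
    rw [← hg q] at h1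
    have h2 : ⟪pu B q, N q⟫ = -(g q * τ q) := by
      rw [h1, mul_neg, neg_neg, ← mul_assoc, mul_inv_cancel₀ (hgne q), one_mul]
    exact h2
  have hpuB : ∀ q, pu B q = (-(g q * τ q)) • N q := fun q => by
    have hexp := expand3 (T q) (N q) (pu B q) (hTT q) (hNN q) (hTN q)
    rw [← hB q] at hexp
    have e1 : ⟪pu B q, T q⟫ = 0 := by rw [hpuB_cross q]; exact inner_cross_left _ _
    have e3 : ⟪pu B q, B q⟫ = 0 := by
      rw [hpuB_cross q, hB q, inner_cross_cross, hTT q, hTN q]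
      have : ⟪pu N q, N q⟫ = 0 := by rw [real_inner_comm]; exact hNpuN q
      rw [this]; ring
    rw [e1, e3, hpuBN q] at hexp
    rw [hexp]; module
  -- derivative of N
  have hN_BT : ∀ q, N q = cross3 (B q) (T q) := fun q => by
    rw [hB q, cross3_cross3, hTT q, real_inner_comm, hTN q]
    module
  have hpuN : ∀ q, pu N q = (g q * τ q) • B q - (g q * κ q) • T q := fun q => by
    have hc : HasDerivAt (fun u => cross3 (B (u, q.2)) (T (u, q.2)))
        (cross3 (pu B q) (T q) + cross3 (B q) (pu T q)) q.1 :=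
      cross3_hasDerivAt (pu_hasDerivAt (hdB q)) (pu_hasDerivAt (hdT q))
    have h0 : (fun u => cross3 (B (u, q.2)) (T (u, q.2))) = fun u => N (u, q.2) :=
      funext fun u => (hN_BT (u, q.2)).symm
    rw [h0] at hc
    have h1 : pu N q = cross3 (pu B q) (T q) + cross3 (B q) (pu T q) := hc.deriv
    have h2 : cross3 (N q) (T q) = -(B q) := by rw [cross3_anticomm, hB q]
    have h3 : cross3 (B q) (N q) = -(T q) := by
      rw [hB q, cross3_cross3, hTN q, hNN q]; module
    rw [h1, hpuB q, hpuT q, cross3_smul_left, cross3_smul_right, h2, h3]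
    module
  -- now fix p
  intro p
  have hdvN : Differentiable ℝ vN := hvN.differentiable (by simp)
  have hdvB : Differentiable ℝ vB := hvB.differentiable (by simp)
  have hdvT : Differentiable ℝ vT := hvT.differentiable (by simp)
  have hpuV : pu (pt X) p =
      vN p • pu N p + pu vN p • N p + (vB p • pu B p + pu vB p • B p)
        + (vT p • pu T p + pu vT p • T p) := by
    have hVeq : pt X = fun q => vN q • N q + vB q • B q + vT q • T q := funext hflow
    rw [hVeq]
    exact ((((pu_hasDerivAt (hdvN p)).smul (pu_hasDerivAt (hdN p))).add
      ((pu_hasDerivAt (hdvB p)).smul (pu_hasDerivAt (hdB p)))).add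
      ((pu_hasDerivAt (hdvT p)).smul (pu_hasDerivAt (hdT p)))).deriv
  have hW : HasDerivAt (fun t => pu X (p.1, t)) (pu (pt X) p) p.2 := by
    have h := pt_hasDerivAt (hpuX_cd.differentiable (by simp) p)
    rwa [clairaut hX p] at h
  have hip_ne : ⟪pu X p, pu X p⟫ ≠ 0 := by
    rw [real_inner_self_eq_norm_mul_norm]; exact mul_ne_zero (hnorm_ne p) (hnorm_ne p)
  have hip : HasDerivAt (fun t => ⟪pu X (p.1, t), pu X (p.1, t)⟫)
      (⟪pu X p, pu (pt X) p⟫ + ⟪pu (pt X) p, pu X p⟫) p.2 := HasDerivAt.inner ℝ hW hW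
  have hsqrt := (Real.hasDerivAt_sqrt hip_ne).comp p.2 hip
  have hgfun : (Real.sqrt ∘ fun t => ⟪pu X (p.1, t), pu X (p.1, t)⟫) = fun t => g (p.1, t) := by
    funext t
    show Real.sqrt ⟪pu X (p.1, t), pu X (p.1, t)⟫ = _
    rw [hg (p.1, t), real_inner_self_eq_norm_mul_norm, Real.sqrt_mul_self (norm_nonneg _)]
  rw [hgfun] at hsqrt
  have hsval : 1 / (2 * Real.sqrt ⟪pu X p, pu X p⟫) *
        (⟪pu X p, pu (pt X) p⟫ + ⟪pu (pt X) p, pu X p⟫)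
      = (g p)⁻¹ * ⟪pu (pt X) p, pu X p⟫ := by
    rw [real_inner_comm (pu X p) (pu (pt X) p)]
    have h2 : Real.sqrt ⟪pu X p, pu X p⟫ = g p := by
      rw [real_inner_self_eq_norm_mul_norm, Real.sqrt_mul_self (norm_nonneg _), ← hg p]
    rw [h2]; field_simp [hgne p]; ring
  rw [hsval] at hsqrt
  have hTp : T p = (g p)⁻¹ • pu X p := congrFun hT_eq p
  have hpuXT : pu X p = g p • T p := by
    rw [hTp, smul_smul, mul_inv_cancel₀ (hgne p), one_smul]
  have hptT : pt T p = ((g p)⁻¹ • pu (pt X) p +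
      (-((g p)⁻¹ * ⟪pu (pt X) p, pu X p⟫) / g p ^ 2) • pu X p) := by
    have h := (hsqrt.inv (hgne p)).smul hW
    have hfun : (fun t => (g (p.1, t))⁻¹ • pu X (p.1, t)) = fun t => T (p.1, t) := by
      funext t; rw [hT_eq]
    change HasDerivAt (fun t => (g (p.1, t))⁻¹ • pu X (p.1, t)) _ p.2 at h
    rw [hfun] at h
    exact h.deriv
  have hNT : ⟪N p, T p⟫ = 0 := by rw [real_inner_comm]; exact hTN p
  have hWT : ⟪pu (pt X) p, T p⟫ = vT p * (g p * κ p) * ⟪N p, T p⟫ + pu vT p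
      - vN p * (g p * κ p) := by
    rw [hpuV, hpuN p, hpuB p, hpuT p]
    simp only [inner_add_left, inner_sub_left, real_inner_smul_left, smul_smul]
    rw [hTT p, hNT, hBT p]
    ring
  rw [hNT] at hWT
  have hDsN : Ds X vN p = (g p)⁻¹ * pu vN p := by
    show ‖pu X p‖⁻¹ • pu vN p = _
    rw [← hg p, smul_eq_mul]
  have hDsB : Ds X vB p = (g p)⁻¹ * pu vB p := by
    show ‖pu X p‖⁻¹ • pu vB p = _
    rw [← hg p, smul_eq_mul]
  rw [hptT, hDsN, hDsB, hpuXT, real_inner_smul_right, hWT, hpuV, hpuN p, hpuB p, hpuT p]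
  match_scalars <;> (field_simp [hgne p]; try ring)
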